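/- Let σ_0 > 0, n ≥ 3, ε > 0, and Σ_k² = σ_0² U_1 ⋯ U_k with U_i i.i.d. χ²_{n-1}/(n-1). Then Pr(⋃_{k≥m} {Σ_k > ε}) ≤ (σ_0/ε) · exp(-m/(4n-1)) / (1 - exp(-1/(4n-1))), and consequently Σ_k → 0 almost surely. -/

import Mathlib

/-!
With `p = (n - 1) / 2`, each `U i` has the Gamma law `Γ(p, p)`, so
`E √|U i| = Γ(p + 1/2) / (Γ(p) √p)`, and a Kershaw-type inequality
`Γ(x + 1/2) / (Γ(x) √x) ≤ exp (-1 / (8x + 3))` at `x = p` (where `8p + 3 = 4n - 1`) together with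
independence gives `E Σ_k ≤ σ₀ exp (-k / (4n - 1))`. Markov's inequality and a union bound over
`k ≥ m` give the tail estimate; as these bounds are summable in `k`, Borel–Cantelli gives `Σ_k → 0`
almost surely.

For the Gamma inequality, `D x = (Γ(x + 1/2) / Γ(x))² / x · exp (2 / (8x + 3))` increases under
`x ↦ x + 1`, while the identity `Γ(x + 1/2) / Γ(x) · Γ(x + 1) / Γ(x + 1/2) = x` and log-convexity of
`Γ` give `D x ≤ 1 + 1 / (2x)`; letting `x → ∞` along `x + ℕ` yields `D x ≤ 1`.
-/

open MeasureTheory ProbabilityTheory Filter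
open Real Topology
open scoped ENNReal

theorem Real.Gamma_sq_le_mul_Gamma {s t : ℝ} (hs : 0 < s) (ht : 0 < t) :
    Gamma ((s + t) / 2) ^ 2 ≤ Gamma s * Gamma t := by
  have h := Gamma_mul_add_mul_le_rpow_Gamma_mul_rpow_Gamma hs ht one_half_pos one_half_pos
    (add_halves 1)
  rw [show 1 / 2 * s + 1 / 2 * t = (s + t) / 2 by ring] at h
  calc Gamma ((s + t) / 2) ^ 2 ≤ (Gamma s ^ (1 / 2 : ℝ) * Gamma t ^ (1 / 2 : ℝ)) ^ 2 :=
        pow_le_pow_left₀ (Gamma_pos_of_pos (by positivity)).le h 2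
    _ = Gamma s * Gamma t := by
        rw [mul_pow, ← sqrt_eq_rpow, ← sqrt_eq_rpow, sq_sqrt (Gamma_pos_of_pos hs).le,
          sq_sqrt (Gamma_pos_of_pos ht).le]

noncomputable def gammaHalfRatio (x : ℝ) : ℝ := Gamma (x + 1 / 2) / Gamma x

section gammaHalfRatio

variable {x : ℝ}

lemma gammaHalfRatio_pos (hx : 0 < x) : 0 < gammaHalfRatio x :=
  div_pos (Gamma_pos_of_pos (by linarith)) (Gamma_pos_of_pos hx)

lemma gammaHalfRatio_mul_gammaHalfRatio_add_half (hx : 0 < x) :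
    gammaHalfRatio x * gammaHalfRatio (x + 1 / 2) = x := by
  have h1 := (Gamma_pos_of_pos hx).ne'
  have h2 := (Gamma_pos_of_pos (show 0 < x + 1 / 2 by linarith)).ne'
  rw [gammaHalfRatio, gammaHalfRatio, add_assoc, add_halves, Gamma_add_one hx.ne']
  field_simp

lemma gammaHalfRatio_add_one (hx : 0 < x) :
    gammaHalfRatio (x + 1) = gammaHalfRatio x * ((x + 1 / 2) / x) := by
  have h1 := (Gamma_pos_of_pos hx).ne'
  rw [gammaHalfRatio, gammaHalfRatio, add_right_comm, Gamma_add_one (by linarith),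
    Gamma_add_one hx.ne']
  field_simp

lemma sub_half_le_gammaHalfRatio_sq (hx : 1 / 2 < x) : x - 1 / 2 ≤ gammaHalfRatio x ^ 2 := by
  have hΓ : Gamma x ^ 2 ≤ Gamma (x - 1 / 2) * Gamma (x + 1 / 2) := by
    simpa using Gamma_sq_le_mul_Gamma (s := x - 1 / 2) (t := x + 1 / 2) (by linarith)
      (by linarith)
  have hrec : Gamma (x + 1 / 2) = (x - 1 / 2) * Gamma (x - 1 / 2) := by
    rw [← Gamma_add_one (by linarith)]; ring_nf
  rw [gammaHalfRatio, div_pow, le_div_iff₀ (pow_pos (Gamma_pos_of_pos (by linarith)) 2)]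
  calc (x - 1 / 2) * Gamma x ^ 2 ≤ (x - 1 / 2) * (Gamma (x - 1 / 2) * Gamma (x + 1 / 2)) :=
        mul_le_mul_of_nonneg_left hΓ (by linarith)
    _ = Gamma (x + 1 / 2) ^ 2 := by rw [hrec]; ring

end gammaHalfRatio

noncomputable def gammaHalfRatioDefect (x : ℝ) : ℝ :=
  gammaHalfRatio x ^ 2 / x * exp (2 / (8 * x + 3))

section gammaHalfRatioDefect

variable {x : ℝ}

lemma gammaHalfRatioDefect_pos (hx : 0 < x) : 0 < gammaHalfRatioDefect x := by
  have := gammaHalfRatio_pos hx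
  unfold gammaHalfRatioDefect
  positivity

lemma gammaHalfRatioDefect_le_add_one (hx : 0 < x) :
    gammaHalfRatioDefect x ≤ gammaHalfRatioDefect (x + 1) := by
  have hy : 0 ≤ 1 / (2 * x + 1) ^ 2 := by positivity
  have hy1 : 1 / (2 * x + 1) ^ 2 < 1 := by rw [div_lt_one (by positivity)]; nlinarith
  have hδ : 2 / (8 * x + 3) - 2 / (8 * (x + 1) + 3) ≤ 1 / (2 * x + 1) ^ 2 := by
    rw [div_sub_div _ _ (by positivity) (by positivity), div_le_div_iff₀ (by positivity)
      (by positivity)]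
    nlinarith
  have hexp : exp (2 / (8 * x + 3)) ≤
      (x + 1 / 2) ^ 2 / (x * (x + 1)) * exp (2 / (8 * (x + 1) + 3)) := by
    calc exp (2 / (8 * x + 3))
        = exp (2 / (8 * x + 3) - 2 / (8 * (x + 1) + 3)) * exp (2 / (8 * (x + 1) + 3)) := by
          rw [← exp_add, sub_add_cancel]
      _ ≤ 1 / (1 - 1 / (2 * x + 1) ^ 2) * exp (2 / (8 * (x + 1) + 3)) := by
          gcongr
          exact (exp_le_exp.2 hδ).trans (exp_bound_div_one_sub_of_interval hy hy1)
      _ = (x + 1 / 2) ^ 2 / (x * (x + 1)) * exp (2 / (8 * (x + 1) + 3)) := by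
          have hx1 : x + 1 ≠ 0 := by positivity
          rw [show 1 - 1 / (2 * x + 1) ^ 2 = 4 * (x * (x + 1)) / (2 * x + 1) ^ 2 by
            field_simp; ring]
          field_simp
          ring
  have hg := gammaHalfRatio_pos hx
  calc gammaHalfRatioDefect x
      ≤ gammaHalfRatio x ^ 2 / x *
          ((x + 1 / 2) ^ 2 / (x * (x + 1)) * exp (2 / (8 * (x + 1) + 3))) := by
        unfold gammaHalfRatioDefect
        gcongr
    _ = gammaHalfRatioDefect (x + 1) := by
        rw [gammaHalfRatioDefect, gammaHalfRatio_add_one hx]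
        field_simp

lemma gammaHalfRatioDefect_mul_add_half_le_one (hx : 0 < x) :
    gammaHalfRatioDefect x * gammaHalfRatioDefect (x + 1 / 2) ≤ 1 := by
  have hy : 0 ≤ 1 / (2 * x + 1) := by positivity
  have hy1 : 1 / (2 * x + 1) < 1 := by rw [div_lt_one (by positivity)]; linarith
  have hsum : 2 / (8 * x + 3) + 2 / (8 * (x + 1 / 2) + 3) ≤ 1 / (2 * x + 1) := by
    rw [div_add_div _ _ (by positivity) (by positivity), div_le_div_iff₀ (by positivity)
      (by positivity)]
    nlinarith
  have hexp : exp (2 / (8 * x + 3) + 2 / (8 * (x + 1 / 2) + 3)) ≤ (x + 1 / 2) / x :=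
    calc exp (2 / (8 * x + 3) + 2 / (8 * (x + 1 / 2) + 3))
        ≤ 1 / (1 - 1 / (2 * x + 1)) :=
          (exp_le_exp.2 hsum).trans (exp_bound_div_one_sub_of_interval hy hy1)
      _ = (x + 1 / 2) / x := by field_simp; ring
  calc gammaHalfRatioDefect x * gammaHalfRatioDefect (x + 1 / 2)
      = (gammaHalfRatio x * gammaHalfRatio (x + 1 / 2)) ^ 2 / (x * (x + 1 / 2)) *
          exp (2 / (8 * x + 3) + 2 / (8 * (x + 1 / 2) + 3)) := by
        rw [gammaHalfRatioDefect, gammaHalfRatioDefect, exp_add]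
        field_simp
    _ ≤ x ^ 2 / (x * (x + 1 / 2)) * ((x + 1 / 2) / x) := by
        rw [gammaHalfRatio_mul_gammaHalfRatio_add_half hx]
        gcongr
    _ = 1 := by field_simp

lemma sub_half_div_le_gammaHalfRatioDefect (hx : 1 / 2 < x) :
    (x - 1 / 2) / x ≤ gammaHalfRatioDefect x := by
  have hx0 : 0 < x := by linarith
  calc (x - 1 / 2) / x ≤ gammaHalfRatio x ^ 2 / x := by
        gcongr
        exact sub_half_le_gammaHalfRatio_sq hx
    _ ≤ gammaHalfRatioDefect x :=
        le_mul_of_one_le_right (by positivity) (one_le_exp (by positivity))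

lemma gammaHalfRatioDefect_le_one_add (hx : 0 < x) :
    gammaHalfRatioDefect x ≤ 1 + 1 / (2 * x) := by
  have hlow := sub_half_div_le_gammaHalfRatioDefect (x := x + 1 / 2) (by linarith)
  rw [add_sub_cancel_right] at hlow
  have h := (mul_le_mul_of_nonneg_left hlow (gammaHalfRatioDefect_pos hx).le).trans
    (gammaHalfRatioDefect_mul_add_half_le_one hx)
  rw [mul_div_assoc', div_le_one (by positivity)] at h
  calc gammaHalfRatioDefect x ≤ (x + 1 / 2) / x := by rw [le_div_iff₀ hx]; linarith
    _ = 1 + 1 / (2 * x) := by field_simp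

lemma gammaHalfRatioDefect_le_one (hx : 0 < x) : gammaHalfRatioDefect x ≤ 1 := by
  have hmono : ∀ j : ℕ, gammaHalfRatioDefect x ≤ gammaHalfRatioDefect (x + j) := by
    intro j
    induction j with
    | zero => simp
    | succ j ih =>
      push_cast
      rw [← add_assoc]
      exact ih.trans (gammaHalfRatioDefect_le_add_one (by positivity))
  have hlim : Tendsto (fun j : ℕ => 1 + 1 / (2 * (x + j))) atTop (𝓝 1) := by
    have h := ((tendsto_atTop_add_const_left atTop x tendsto_natCast_atTop_atTop).const_mul_atTop
      two_pos).inv_tendsto_atTop.const_add 1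
    simpa using h
  exact ge_of_tendsto' hlim fun j =>
    (hmono j).trans (gammaHalfRatioDefect_le_one_add (by positivity))

theorem Real.Gamma_add_half_div_le (hx : 0 < x) :
    Gamma (x + 1 / 2) / (Gamma x * √x) ≤ exp (-1 / (8 * x + 3)) := by
  have hsq : (Gamma (x + 1 / 2) / (Gamma x * √x)) ^ 2
      = gammaHalfRatioDefect x * exp (-1 / (8 * x + 3)) ^ 2 := by
    rw [gammaHalfRatioDefect, gammaHalfRatio, ← exp_nat_mul, mul_assoc, ← exp_add, div_pow,
      mul_pow, sq_sqrt hx.le, div_pow]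
    ring_nf
    simp
  refine le_of_pow_le_pow_left₀ two_ne_zero (exp_pos _).le ?_
  rw [hsq]
  exact mul_le_of_le_one_left (by positivity) (gammaHalfRatioDefect_le_one hx)

end gammaHalfRatioDefect

theorem withDensity_scaledChiSq_eq_gammaMeasure (ν : ℝ) :
    volume.withDensity (fun u => ENNReal.ofReal
      (if 0 < u then (ν / 2) ^ (ν / 2) / Gamma (ν / 2) * u ^ (ν / 2 - 1) * exp (-ν * u / 2)
       else 0)) = gammaMeasure (ν / 2) (ν / 2) := by
  refine withDensity_congr_ae ?_
  filter_upwards [volume.ae_ne 0] with u hu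
  rcases hu.lt_or_gt with hneg | hpos
  · rw [gammaPDF_of_neg hneg, if_neg hneg.not_gt, ENNReal.ofReal_zero]
  · rw [gammaPDF_of_nonneg hpos.le, if_pos hpos]
    ring_nf

theorem lintegral_sqrt_abs_gammaMeasure {a r : ℝ} (ha : 0 < a) (hr : 0 < r) :
    ∫⁻ x, ENNReal.ofReal √|x| ∂gammaMeasure a r
      = ENNReal.ofReal (Gamma (a + 1 / 2) / (Gamma a * √r)) := by
  have hpdf : ∀ b, Measurable (gammaPDF b r) := fun b =>
    ENNReal.measurable_ofReal.comp (measurable_gammaPDFReal b r)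
  have hshift : (gammaPDF a r * fun x => ENNReal.ofReal √|x|) =ᵐ[volume]
      fun x => ENNReal.ofReal (Gamma (a + 1 / 2) / (Gamma a * √r)) * gammaPDF (a + 1 / 2) r x := by
    filter_upwards [volume.ae_ne 0] with x hx
    rw [Pi.mul_apply]
    rcases hx.lt_or_gt with hneg | hpos
    · simp [gammaPDF_of_neg hneg]
    · have hΓ := (Gamma_pos_of_pos ha).ne'
      have hΓ' := (Gamma_pos_of_pos (show 0 < a + 1 / 2 by linarith)).ne'
      rw [gammaPDF_of_nonneg hpos.le, gammaPDF_of_nonneg hpos.le, abs_of_pos hpos,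
        ← ENNReal.ofReal_mul (by positivity), ← ENNReal.ofReal_mul (by positivity)]
      congr 1
      rw [show a + 1 / 2 - 1 = a - 1 + 1 / 2 by ring, rpow_add hpos, rpow_add hr,
        sqrt_eq_rpow x, sqrt_eq_rpow r]
      field_simp
  rw [gammaMeasure, lintegral_withDensity_eq_lintegral_mul _ (hpdf a)
      (by fun_prop : Measurable fun x : ℝ => ENNReal.ofReal √|x|), lintegral_congr_ae hshift,
    lintegral_const_mul _ (hpdf _), lintegral_gammaPDF_eq_one (by linarith) hr, mul_one]

theorem measure_lt_sqrt_mul_prod_le {Ω ι : Type*} [MeasurableSpace Ω] {P : Measure Ω}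
    {U : ι → Ω → ℝ} (hU : ∀ i, Measurable (U i)) (hindep : iIndepFun U P) (s : Finset ι)
    {b ε t : ℝ} (hb : 0 ≤ b) (hε : 0 < ε) (ht : 0 ≤ t)
    (hmoment : ∀ i ∈ s, ∫⁻ ω, ENNReal.ofReal √|U i ω| ∂P ≤ ENNReal.ofReal t) :
    P {ω | ε < √(b * ∏ i ∈ s, U i ω)} ≤ ENNReal.ofReal (√b / ε * t ^ s.card) := by
  set X : Ω → ℝ≥0∞ := fun ω => ENNReal.ofReal √b * ∏ i ∈ s, ENNReal.ofReal √|U i ω|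
  -- the absolute values make this hold without any sign condition on the `Uᵢ`
  have hsub : {ω | ε < √(b * ∏ i ∈ s, U i ω)} ⊆ {ω | ENNReal.ofReal ε ≤ X ω} := by
    intro ω hω
    have hle : √(b * ∏ i ∈ s, U i ω) ≤ √b * ∏ i ∈ s, √|U i ω| := by
      rw [← sqrt_prod _ fun i _ => abs_nonneg _, ← sqrt_mul hb, ← Finset.abs_prod]
      exact sqrt_le_sqrt (mul_le_mul_of_nonneg_left (le_abs_self _) hb)
    simp only [X, Set.mem_ofPred_eq, ← ENNReal.ofReal_prod_of_nonneg fun i _ => sqrt_nonneg _,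
      ← ENNReal.ofReal_mul (sqrt_nonneg b)]
    exact ENNReal.ofReal_le_ofReal (hω.le.trans hle)
  have hX : ∫⁻ ω, X ω ∂P ≤ ENNReal.ofReal √b * ENNReal.ofReal t ^ s.card := by
    have hV : iIndepFun (fun i ω => ENNReal.ofReal √|U i ω|) P :=
      hindep.comp (fun _ x => ENNReal.ofReal √|x|) fun _ => by fun_prop
    rw [lintegral_const_mul _ (by fun_prop),
      lintegral_prod_eq_prod_lintegral_of_indepFun s _ hV fun i => by fun_prop]
    gcongr
    exact Finset.prod_le_pow_card _ _ _ hmoment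
  calc P {ω | ε < √(b * ∏ i ∈ s, U i ω)}
      ≤ (∫⁻ ω, X ω ∂P) / ENNReal.ofReal ε :=
        (measure_mono hsub).trans (meas_ge_le_lintegral_div (by fun_prop)
          (by simpa using hε) ENNReal.ofReal_ne_top)
    _ ≤ ENNReal.ofReal √b * ENNReal.ofReal t ^ s.card / ENNReal.ofReal ε := by gcongr
    _ = ENNReal.ofReal (√b / ε * t ^ s.card) := by
        rw [ENNReal.ofReal_mul (by positivity), ENNReal.ofReal_div_of_pos hε,
          ENNReal.ofReal_pow ht, ENNReal.mul_div_right_comm]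

theorem tsum_add_le_ofReal_geometric {a : ℕ → ℝ≥0∞} {C t : ℝ} (hC : 0 ≤ C) (ht₀ : 0 ≤ t)
    (ht₁ : t < 1) (ha : ∀ k, a k ≤ ENNReal.ofReal (C * t ^ k)) (m : ℕ) :
    ∑' j, a (j + m) ≤ ENNReal.ofReal (C * t ^ m / (1 - t)) := by
  have hsum : Summable fun j : ℕ => C * t ^ m * t ^ j :=
    (summable_geometric_of_lt_one ht₀ ht₁).mul_left _
  calc ∑' j, a (j + m) ≤ ∑' j, ENNReal.ofReal (C * t ^ m * t ^ j) :=
        ENNReal.tsum_le_tsum fun j => (ha _).trans_eq (by rw [pow_add]; ring_nf)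
    _ = ENNReal.ofReal (∑' j, C * t ^ m * t ^ j) :=
        (ENNReal.ofReal_tsum_of_nonneg (fun j => by positivity) hsum).symm
    _ = ENNReal.ofReal (C * t ^ m / (1 - t)) := by
        rw [tsum_mul_left, tsum_geometric_of_lt_one ht₀ ht₁, div_eq_mul_inv]

theorem ae_tendsto_zero_of_tsum_measure_lt_ne_top {Ω : Type*} [MeasurableSpace Ω]
    {P : Measure Ω} {f : ℕ → Ω → ℝ} (hf : ∀ k ω, 0 ≤ f k ω)
    (hsum : ∀ ε, 0 < ε → ∑' k, P {ω | ε < f k ω} ≠ ∞) :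
    ∀ᵐ ω ∂P, Tendsto (fun k => f k ω) atTop (𝓝 0) := by
  have hev : ∀ᵐ ω ∂P, ∀ j : ℕ, ∀ᶠ k in atTop, f k ω ≤ 1 / ((j : ℝ) + 1) :=
    ae_all_iff.2 fun j => (ae_eventually_notMem (hsum _ (by positivity))).mono
      fun ω hω => hω.mono fun k hk => not_lt.1 hk
  filter_upwards [hev] with ω hω
  refine tendsto_order.2 ⟨fun a ha => Eventually.of_forall fun k => ha.trans_le (hf k ω),
    fun δ hδ => ?_⟩
  obtain ⟨j, hj⟩ := exists_nat_one_div_lt hδ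
  exact (hω j).mono fun k hk => hk.trans_lt hj

theorem gaussian_recursive_collapse_as_general
    (n : ℕ) (hn : 3 ≤ n) (σ₀ : ℝ) (hσ₀ : 0 < σ₀)
    (Ω : Type*) [MeasurableSpace Ω] (P : Measure Ω)
    (U : ℕ → Ω → ℝ) (hUmeas : ∀ i, Measurable (U i))
    (hUindep : iIndepFun U P)
    (hUlaw : ∀ i, Measure.map (U i) P =
      volume.withDensity (fun u => ENNReal.ofReal
        (if 0 < u then
          (((n : ℝ) - 1) / 2) ^ (((n : ℝ) - 1) / 2) / Real.Gamma (((n : ℝ) - 1) / 2) *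
            u ^ (((n : ℝ) - 1) / 2 - 1) * Real.exp (-((n : ℝ) - 1) * u / 2)
         else 0))) :
    (∀ ε : ℝ, 0 < ε → ∀ m : ℕ, 1 ≤ m →
      P (⋃ k ∈ {k : ℕ | m ≤ k},
          {ω | ε < Real.sqrt (σ₀ ^ 2 * ∏ i ∈ Finset.Icc 1 k, U i ω)})
        ≤ ENNReal.ofReal (σ₀ / ε * Real.exp (-(m : ℝ) / (4 * n - 1)) /
            (1 - Real.exp (-1 / (4 * n - 1)))))
    ∧ (∀ᵐ ω ∂P, Tendsto (fun k => Real.sqrt (σ₀ ^ 2 * ∏ i ∈ Finset.Icc 1 k, U i ω))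
        atTop (nhds 0)) := by
  have hn' : (3 : ℝ) ≤ n := by exact_mod_cast hn
  have hp : 0 < ((n : ℝ) - 1) / 2 := by linarith
  set t := exp (-1 / (4 * n - 1)) with ht
  have ht₀ : 0 ≤ t := (exp_pos _).le
  have ht₁ : t < 1 := exp_lt_one_iff.2 (div_neg_of_neg_of_pos (by norm_num) (by linarith))
  have hmoment : ∀ i, ∫⁻ ω, ENNReal.ofReal √|U i ω| ∂P ≤ ENNReal.ofReal t := by
    intro i
    rw [← lintegral_map (f := fun x => ENNReal.ofReal √|x|) (by fun_prop) (hUmeas i), hUlaw i,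
      withDensity_scaledChiSq_eq_gammaMeasure, lintegral_sqrt_abs_gammaMeasure hp hp]
    refine ENNReal.ofReal_le_ofReal ((Gamma_add_half_div_le hp).trans_eq ?_)
    rw [show (8 : ℝ) * (((n : ℝ) - 1) / 2) + 3 = 4 * n - 1 by ring]
  have hbound : ∀ ε, 0 < ε → ∀ k,
      P {ω | ε < √(σ₀ ^ 2 * ∏ i ∈ Finset.Icc 1 k, U i ω)} ≤ ENNReal.ofReal (σ₀ / ε * t ^ k) := by
    intro ε hε k
    simpa [sqrt_sq hσ₀.le] using measure_lt_sqrt_mul_prod_le hUmeas hUindep (Finset.Icc 1 k)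
      (sq_nonneg σ₀) hε ht₀ fun i _ => hmoment i
  refine ⟨fun ε hε m _ => ?_, ae_tendsto_zero_of_tsum_measure_lt_ne_top
    (fun k ω => sqrt_nonneg _) fun ε hε => ?_⟩
  · calc P (⋃ k ∈ {k : ℕ | m ≤ k}, {ω | ε < √(σ₀ ^ 2 * ∏ i ∈ Finset.Icc 1 k, U i ω)})
        ≤ ∑' j, P {ω | ε < √(σ₀ ^ 2 * ∏ i ∈ Finset.Icc 1 (j + m), U i ω)} :=
          Set.iUnion_ge_eq_iUnion_nat_add
            (fun k => {ω | ε < √(σ₀ ^ 2 * ∏ i ∈ Finset.Icc 1 k, U i ω)}) m ▸ measure_iUnion_le _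
      _ ≤ ENNReal.ofReal (σ₀ / ε * t ^ m / (1 - t)) :=
          tsum_add_le_ofReal_geometric (by positivity) ht₀ ht₁ (hbound ε hε) m
      _ = _ := by rw [ht, ← exp_nat_mul]; ring_nf
  · have h := tsum_add_le_ofReal_geometric (by positivity) ht₀ ht₁ (hbound ε hε) 0
    simp only [add_zero] at h
    exact ne_top_of_le_ne_top ENNReal.ofReal_ne_top h

/-- Tail union bound and almost-sure collapse for the Gaussian recursive training
process: `U i` are i.i.d. `χ²_{n-1}/(n-1)` random variables, `Σ_k² = σ₀² U 1 ⋯ U k`;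
then `Pr(⋃_{k ≥ m} {Σ_k > ε}) ≤ (σ₀/ε) exp(-m/(4n-1)) / (1 - exp(-1/(4n-1)))` and
`Σ_k → 0` almost surely. -/
theorem gaussian_recursive_collapse_as
    (n : ℕ) (hn : 3 ≤ n) (σ₀ : ℝ) (hσ₀ : 0 < σ₀)
    (Ω : Type*) [MeasurableSpace Ω] (P : Measure Ω) [IsProbabilityMeasure P]
    (U : ℕ → Ω → ℝ) (hUmeas : ∀ i, Measurable (U i))
    (hUindep : iIndepFun U P)
    (hUlaw : ∀ i, Measure.map (U i) P =
      volume.withDensity (fun u => ENNReal.ofReal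
        (if 0 < u then
          (((n : ℝ) - 1) / 2) ^ (((n : ℝ) - 1) / 2) / Real.Gamma (((n : ℝ) - 1) / 2) *
            u ^ (((n : ℝ) - 1) / 2 - 1) * Real.exp (-((n : ℝ) - 1) * u / 2)
         else 0))) :
    (∀ ε : ℝ, 0 < ε → ∀ m : ℕ, 1 ≤ m →
      P (⋃ k ∈ {k : ℕ | m ≤ k},
          {ω | ε < Real.sqrt (σ₀ ^ 2 * ∏ i ∈ Finset.Icc 1 k, U i ω)})
        ≤ ENNReal.ofReal (σ₀ / ε * Real.exp (-(m : ℝ) / (4 * n - 1)) /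
            (1 - Real.exp (-1 / (4 * n - 1)))))
    ∧ (∀ᵐ ω ∂P, Tendsto (fun k => Real.sqrt (σ₀ ^ 2 * ∏ i ∈ Finset.Icc 1 k, U i ω))
        atTop (nhds 0)) :=
  gaussian_recursive_collapse_as_general n hn σ₀ hσ₀ Ω P U hUmeas hUindep hUlaw
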